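/- Let T and r be positive integers satisfying e·(T+1) < 2^{r-1}, where e is Euler's number. Let P be a finite set of points in ℝ² and let L be a finite set of lines in ℝ² such that: (a) every point of P lies on at least r lines of L, and (b) for every line ℓ ∈ L, the number of lines ℓ' ∈ L with ℓ' ≠ ℓ such that ℓ ∩ ℓ' contains a point of P is at most T. Then L can be partitioned into two subfamilies L₁ and L₂ such that every point of P lies on a line of L₁ and also lies on a line of L₂. -/

import Mathlib

/-- A line in the plane: a one-dimensional affine subspace of ℝ², viewed as a set of points. -/
def IsLine (L : Set (Fin 2 → ℝ)) : Prop :=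
  ∃ u v : Fin 2 → ℝ, v ≠ 0 ∧ L = {p | ∃ t : ℝ, p = u + t • v}

open Finset

section LLLsec

open scoped Classical

variable {α ι : Type*} [DecidableEq α] [DecidableEq ι]

/-- The set of samples avoiding all bad events indexed by `J`. -/
noncomputable def Ncap (Ω : Finset α) (A : ι → Finset α) (J : Finset ι) : Finset α :=
  Ω.filter (fun ω => ∀ j ∈ J, ω ∉ A j)

lemma mem_Ncap {Ω : Finset α} {A : ι → Finset α} {J : Finset ι} {ω : α} :
    ω ∈ Ncap Ω A J ↔ ω ∈ Ω ∧ ∀ j ∈ J, ω ∉ A j := by simp [Ncap]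

lemma Ncap_empty (Ω : Finset α) (A : ι → Finset α) : Ncap Ω A ∅ = Ω := by simp [Ncap]

lemma Ncap_insert (Ω : Finset α) (A : ι → Finset α) (j : ι) (J : Finset ι) :
    Ncap Ω A (insert j J) = Ncap Ω A J \ A j := by
  ext ω
  simp only [Ncap, mem_filter, mem_sdiff, Finset.mem_insert]
  constructor
  · rintro ⟨hω, h⟩
    exact ⟨⟨hω, fun k hk => h k (Or.inr hk)⟩, h j (Or.inl rfl)⟩
  · rintro ⟨⟨hω, h⟩, hj⟩
    refine ⟨hω, fun k hk => ?_⟩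
    rcases hk with rfl | hk
    · exact hj
    · exact h k hk

lemma Ncap_anti (Ω : Finset α) (A : ι → Finset α) {J K : Finset ι} (h : J ⊆ K) :
    Ncap Ω A K ⊆ Ncap Ω A J := by
  intro ω hω
  simp only [Ncap, mem_filter] at *
  exact ⟨hω.1, fun j hj => hω.2 j (h hj)⟩

lemma Ncap_card_insert (Ω : Finset α) (A : ι → Finset α) (j : ι) (J : Finset ι) :
    ((Ncap Ω A (insert j J)).card : ℝ)
      = (Ncap Ω A J).card - (A j ∩ Ncap Ω A J).card := by
  rw [Ncap_insert]
  have h := Finset.card_inter_add_card_sdiff (Ncap Ω A J) (A j)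
  have h' : ((Ncap Ω A J ∩ A j).card : ℝ) + ((Ncap Ω A J \ A j).card : ℝ)
      = ((Ncap Ω A J).card : ℝ) := by exact_mod_cast h
  rw [inter_comm] at h'
  linarith

/-- The core inductive estimate in the proof of the (lopsided) Lovász Local Lemma. -/
theorem lll_claim (Ω : Finset α) (I : Finset ι) (A : ι → Finset α)
    (G : ι → ι → Prop) (M D : ℕ) (hM : 0 < M)
    (x : ℝ) (hx0 : 0 < x) (hx1 : x < 1)
    (hnum : ((M : ℝ))⁻¹ ≤ x * (1 - x) ^ D)
    (hdegb : ∀ i ∈ I, (I.filter (fun j => G i j)).card ≤ D)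
    (hlop : ∀ i ∈ I, ∀ J ⊆ I, i ∉ J → (∀ j ∈ J, ¬ G i j) →
      (A i ∩ Ncap Ω A J).card * M ≤ (Ncap Ω A J).card) :
    ∀ n : ℕ, ∀ J ⊆ I, J.card = n → ∀ i ∈ I, i ∉ J →
      ((A i ∩ Ncap Ω A J).card : ℝ) ≤ x * (Ncap Ω A J).card := by
  have hMR : (0:ℝ) < (M:ℝ) := by exact_mod_cast hM
  intro n
  induction n using Nat.strong_induction_on with
  | _ n ih =>
    intro J hJI hJc i hiI hiJ
    set J₁ : Finset ι := J.filter (fun j => G i j) with hJ₁def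
    set J₂ : Finset ι := J.filter (fun j => ¬ G i j) with hJ₂def
    have hJ12 : J₂ ∪ J₁ = J := by
      rw [hJ₁def, hJ₂def, union_comm]
      exact filter_union_filter_not_eq _ J
    have hJ₂J : J₂ ⊆ J := filter_subset _ _
    have hJ₂I : J₂ ⊆ I := hJ₂J.trans hJI
    have hiJ₂ : i ∉ J₂ := fun h => hiJ (hJ₂J h)
    have hx1' : (0:ℝ) < 1 - x := by linarith
    have peel : ∀ K ⊆ J₁,
        (1 - x) ^ K.card * ((Ncap Ω A J₂).card : ℝ) ≤ ((Ncap Ω A (J₂ ∪ K)).card : ℝ) := by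
      intro K
      induction K using Finset.induction_on with
      | empty => intro _; simp
      | @insert j K hjK ihK =>
        intro hins
        have hKJ₁ : K ⊆ J₁ := (subset_insert j K).trans hins
        have hjJ₁ : j ∈ J₁ := hins (mem_insert_self j K)
        have hjJ : j ∈ J := (filter_subset _ _) hjJ₁
        have hjI : j ∈ I := hJI hjJ
        have hjJ₂ : j ∉ J₂ := by
          intro h
          exact (mem_filter.mp h).2 (mem_filter.mp hjJ₁).2
        have hjJK : j ∉ J₂ ∪ K := by
          simp only [Finset.mem_union]
          rintro (h | h)
          · exact hjJ₂ h
          · exact hjK h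
        have hsubJ : J₂ ∪ K ⊆ J := by
          rw [← hJ12]
          exact union_subset_union_right hKJ₁
        have hcardlt : (J₂ ∪ K).card < n := by
          rw [← hJc]
          exact Finset.card_lt_card ⟨hsubJ, fun hcon => hjJK (hcon hjJ)⟩
        have hsubI : J₂ ∪ K ⊆ I := hsubJ.trans hJI
        have hmain := ih (J₂ ∪ K).card hcardlt (J₂ ∪ K) hsubI rfl j hjI hjJK
        have heq : J₂ ∪ insert j K = insert j (J₂ ∪ K) := union_insert j J₂ K
        rw [heq, Ncap_card_insert, card_insert_of_notMem hjK]
        have hK := ihK hKJ₁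
        calc (1 - x) ^ (K.card + 1) * ((Ncap Ω A J₂).card : ℝ)
            = (1 - x) * ((1 - x) ^ K.card * ((Ncap Ω A J₂).card : ℝ)) := by ring
          _ ≤ (1 - x) * ((Ncap Ω A (J₂ ∪ K)).card : ℝ) :=
              mul_le_mul_of_nonneg_left hK (le_of_lt hx1')
          _ = ((Ncap Ω A (J₂ ∪ K)).card : ℝ) - x * ((Ncap Ω A (J₂ ∪ K)).card : ℝ) := by ring
          _ ≤ ((Ncap Ω A (J₂ ∪ K)).card : ℝ) - ((A j ∩ Ncap Ω A (J₂ ∪ K)).card : ℝ) := by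
              linarith [hmain]
    have hpeel := peel J₁ Subset.rfl
    rw [hJ12] at hpeel
    have hJ₁D : J₁.card ≤ D := by
      have hsub : J₁ ⊆ I.filter (fun j => G i j) := by
        rw [hJ₁def]
        exact filter_subset_filter _ hJI
      exact le_trans (card_le_card hsub) (hdegb i hiI)
    have h2 := hlop i hiI J₂ hJ₂I hiJ₂ (fun j hj => (mem_filter.mp hj).2)
    have hcast : ((A i ∩ Ncap Ω A J₂).card : ℝ) * (M:ℝ) ≤ ((Ncap Ω A J₂).card : ℝ) := by
      exact_mod_cast h2
    have h2' : ((A i ∩ Ncap Ω A J₂).card : ℝ) ≤ ((Ncap Ω A J₂).card : ℝ) * (M:ℝ)⁻¹ := by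
      have h := (le_div_iff₀ hMR).mpr hcast
      rwa [div_eq_mul_inv] at h
    have hmono : (A i ∩ Ncap Ω A J).card ≤ (A i ∩ Ncap Ω A J₂).card :=
      card_le_card (inter_subset_inter (Finset.Subset.refl _) (Ncap_anti Ω A hJ₂J))
    calc ((A i ∩ Ncap Ω A J).card : ℝ)
        ≤ ((A i ∩ Ncap Ω A J₂).card : ℝ) := by exact_mod_cast hmono
      _ ≤ ((Ncap Ω A J₂).card : ℝ) * (M:ℝ)⁻¹ := h2'
      _ ≤ ((Ncap Ω A J₂).card : ℝ) * (x * (1 - x) ^ D) :=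
          mul_le_mul_of_nonneg_left hnum (Nat.cast_nonneg _)
      _ ≤ ((Ncap Ω A J₂).card : ℝ) * (x * (1 - x) ^ J₁.card) := by
          apply mul_le_mul_of_nonneg_left _ (Nat.cast_nonneg _)
          apply mul_le_mul_of_nonneg_left _ (le_of_lt hx0)
          exact pow_le_pow_of_le_one (by linarith) (by linarith) hJ₁D
      _ = x * ((1 - x) ^ J₁.card * ((Ncap Ω A J₂).card : ℝ)) := by ring
      _ ≤ x * ((Ncap Ω A J).card : ℝ) := mul_le_mul_of_nonneg_left hpeel (le_of_lt hx0)

/-- A finitary, lopsided version of the Lovász Local Lemma. -/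
theorem lll_exists (Ω : Finset α) (I : Finset ι) (A : ι → Finset α)
    (G : ι → ι → Prop) (M D : ℕ) (hM : 0 < M)
    (x : ℝ) (hx0 : 0 < x) (hx1 : x < 1)
    (hnum : ((M : ℝ))⁻¹ ≤ x * (1 - x) ^ D)
    (hdegb : ∀ i ∈ I, (I.filter (fun j => G i j)).card ≤ D)
    (hlop : ∀ i ∈ I, ∀ J ⊆ I, i ∉ J → (∀ j ∈ J, ¬ G i j) →
      (A i ∩ Ncap Ω A J).card * M ≤ (Ncap Ω A J).card)
    (hΩ : Ω.Nonempty) :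
    ∃ ω ∈ Ω, ∀ i ∈ I, ω ∉ A i := by
  have main := lll_claim Ω I A G M D hM x hx0 hx1 hnum hdegb hlop
  have hx1' : (0:ℝ) < 1 - x := by linarith
  have pos : ∀ J : Finset ι, J ⊆ I →
      (1 - x) ^ J.card * (Ω.card : ℝ) ≤ ((Ncap Ω A J).card : ℝ) := by
    intro J
    induction J using Finset.induction_on with
    | empty => intro _; simp [Ncap_empty]
    | @insert j K hjK ihK =>
      intro hins
      have hKI : K ⊆ I := (subset_insert j K).trans hins
      have hjI : j ∈ I := hins (mem_insert_self j K)
      have hmain := main K.card K hKI rfl j hjI hjK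
      have hK := ihK hKI
      rw [Ncap_card_insert, card_insert_of_notMem hjK]
      calc (1 - x) ^ (K.card + 1) * ((Ω.card) : ℝ)
          = (1 - x) * ((1 - x) ^ K.card * (Ω.card : ℝ)) := by ring
        _ ≤ (1 - x) * ((Ncap Ω A K).card : ℝ) :=
            mul_le_mul_of_nonneg_left hK (le_of_lt hx1')
        _ = ((Ncap Ω A K).card : ℝ) - x * ((Ncap Ω A K).card : ℝ) := by ring
        _ ≤ ((Ncap Ω A K).card : ℝ) - ((A j ∩ Ncap Ω A K).card : ℝ) := by linarith [hmain]
  have hfin := pos I Subset.rfl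
  have hΩpos : (0:ℝ) < (Ω.card : ℝ) := by exact_mod_cast card_pos.mpr hΩ
  have hpos : (0:ℝ) < ((Ncap Ω A I).card : ℝ) :=
    lt_of_lt_of_le (mul_pos (pow_pos hx1' _) hΩpos) hfin
  have hne : (Ncap Ω A I).Nonempty := card_pos.mp (by exact_mod_cast hpos)
  obtain ⟨ω, hω⟩ := hne
  have h := mem_Ncap.mp hω
  exact ⟨ω, h.1, h.2⟩

end LLLsec

section Geometry

lemma isLine_eq_lineThrough {L : Set (Fin 2 → ℝ)} (hL : IsLine L)
    {a b : Fin 2 → ℝ} (ha : a ∈ L) (hb : b ∈ L) (hab : a ≠ b) :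
    L = {p | ∃ s : ℝ, p = a + s • (b - a)} := by
  obtain ⟨u, v, hv, rfl⟩ := hL
  obtain ⟨ta, hta⟩ := ha
  obtain ⟨tb, htb⟩ := hb
  have hba : b - a = (tb - ta) • v := by rw [hta, htb]; module
  have htab : tb - ta ≠ 0 := by
    intro h
    apply hab
    rw [hta, htb, sub_eq_zero.mp h]
  have key : ∀ s : ℝ, a + s • (b - a) = u + (ta + s * (tb - ta)) • v := by
    intro s
    rw [hba, hta]
    module
  ext p
  constructor
  · rintro ⟨t, rfl⟩
    refine ⟨(t - ta) / (tb - ta), ?_⟩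
    rw [key, div_mul_cancel₀ _ htab]
    ring_nf
  · rintro ⟨s, rfl⟩
    exact ⟨ta + s * (tb - ta), key s⟩

lemma line_eq_of_two_mem {ℓ₁ ℓ₂ : Set (Fin 2 → ℝ)} (h1 : IsLine ℓ₁) (h2 : IsLine ℓ₂)
    {a b : Fin 2 → ℝ} (ha1 : a ∈ ℓ₁) (hb1 : b ∈ ℓ₁) (ha2 : a ∈ ℓ₂) (hb2 : b ∈ ℓ₂)
    (hab : a ≠ b) : ℓ₁ = ℓ₂ := by
  rw [isLine_eq_lineThrough h1 ha1 hb1 hab, isLine_eq_lineThrough h2 ha2 hb2 hab]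

end Geometry

lemma numeric_lll {T r : ℕ} (hr1 : 1 ≤ r)
    (hTr : Real.exp 1 * ((T : ℝ) + 1) < 2 ^ (r - 1)) :
    (((2:ℕ) ^ r : ℕ) : ℝ)⁻¹ ≤ (((2*T+2:ℕ):ℝ))⁻¹ * (1 - ((2*T+2:ℕ):ℝ)⁻¹) ^ (2*T+1) := by
  set n : ℕ := 2*T+1 with hn_def
  have hnR : ((n:ℕ):ℝ) = 2*(T:ℝ)+1 := by simp [hn_def]
  have hnpos : (0:ℝ) < (n:ℝ) := by rw [hnR]; positivity
  have h1 : ((1:ℝ) + 1/(n:ℝ)) ^ n ≤ Real.exp 1 := by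
    have hle : (1:ℝ) + 1/(n:ℝ) ≤ Real.exp (1/(n:ℝ)) := by
      have := Real.add_one_le_exp (1/(n:ℝ))
      linarith
    calc ((1:ℝ) + 1/(n:ℝ)) ^ n ≤ (Real.exp (1/(n:ℝ))) ^ n := by
          apply pow_le_pow_left₀ (by positivity) hle
      _ = Real.exp ((n:ℝ) * (1/(n:ℝ))) := by rw [← Real.exp_nat_mul]
      _ = Real.exp 1 := by rw [mul_one_div, div_self (ne_of_gt hnpos)]
  have hm : ((2*T+2:ℕ):ℝ) = (n:ℝ) + 1 := by push_cast [hn_def]; ring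
  have hx : (1:ℝ) - ((2*T+2:ℕ):ℝ)⁻¹ = (n:ℝ)/((n:ℝ)+1) := by
    rw [hm]; field_simp; ring
  have hinv : ((n:ℝ)/((n:ℝ)+1)) = ((1:ℝ) + 1/(n:ℝ))⁻¹ := by
    field_simp
  have hpow : ((1:ℝ) - ((2*T+2:ℕ):ℝ)⁻¹) ^ (2*T+1) = (((1:ℝ) + 1/(n:ℝ)) ^ n)⁻¹ := by
    rw [hx, hinv, inv_pow, hn_def]
  have h2 : ((2*T+2:ℕ):ℝ) * Real.exp 1 < 2 ^ r := by
    have hr' : r - 1 + 1 = r := Nat.succ_pred_eq_of_pos hr1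
    have hpow2 : (2:ℝ) ^ r = 2 * 2 ^ (r-1) := by
      rw [← pow_succ', hr']
    rw [hpow2]
    push_cast
    nlinarith [hTr]
  have hA : (0:ℝ) < ((2*T+2:ℕ):ℝ) := by positivity
  rw [hpow]
  have step : (((2*T+2:ℕ):ℝ))⁻¹ * (((1:ℝ) + 1/(n:ℝ)) ^ n)⁻¹
      = (((2*T+2:ℕ):ℝ) * ((1:ℝ) + 1/(n:ℝ)) ^ n)⁻¹ := by
    rw [mul_inv]
  rw [step]
  have hcast : (((2:ℕ) ^ r : ℕ) : ℝ) = (2:ℝ)^r := by push_cast; ring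
  rw [hcast]
  apply inv_anti₀
  · positivity
  · calc ((2*T+2:ℕ):ℝ) * ((1:ℝ) + 1/(n:ℝ)) ^ n
        ≤ ((2*T+2:ℕ):ℝ) * Real.exp 1 := mul_le_mul_of_nonneg_left h1 (le_of_lt hA)
      _ ≤ (2:ℝ)^r := le_of_lt h2

set_option maxHeartbeats 2000000 in
/-- Theorem 4 of the paper (proved via the Lovász Local Lemma): if e(T+1) < 2^(r-1),
every point of P lies on at least r lines of L, and every line of L meets at most T
other lines of L in points of P, then L splits into two subfamilies each covering P. -/
theorem cover_decomposition_LLL (T r : ℕ) (hT : 0 < T) (hr : 0 < r)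
    (hTr : Real.exp 1 * ((T : ℝ) + 1) < 2 ^ (r - 1))
    (P : Set (Fin 2 → ℝ)) (hP : P.Finite)
    (L : Set (Set (Fin 2 → ℝ))) (hL : L.Finite)
    (hlines : ∀ ℓ ∈ L, IsLine ℓ)
    (hcover : ∀ p ∈ P, r ≤ {ℓ ∈ L | p ∈ ℓ}.ncard)
    (hdeg : ∀ ℓ ∈ L, {ℓ' ∈ L | ℓ' ≠ ℓ ∧ ∃ p ∈ P, p ∈ ℓ ∧ p ∈ ℓ'}.ncard ≤ T) :
    ∃ L₁ L₂ : Set (Set (Fin 2 → ℝ)), L₁ ∪ L₂ = L ∧ Disjoint L₁ L₂ ∧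
      (∀ p ∈ P, ∃ ℓ ∈ L₁, p ∈ ℓ) ∧ (∀ p ∈ P, ∃ ℓ ∈ L₂, p ∈ ℓ) := by
  classical
  -- r ≥ 2
  have hr2 : 2 ≤ r := by
    by_contra hcon
    push_neg at hcon
    have hr1 : r = 1 := by omega
    rw [hr1] at hTr
    norm_num at hTr
    have hT1 : (1:ℝ) ≤ (T:ℝ) := by exact_mod_cast hT
    nlinarith [Real.exp_one_gt_d9]
  set Pfin := hP.toFinset with hPfin_def
  set Lfin := hL.toFinset with hLfin_def
  have hmemP : ∀ p, p ∈ Pfin ↔ p ∈ P := fun p => hP.mem_toFinset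
  have hmemL : ∀ ℓ, ℓ ∈ Lfin ↔ ℓ ∈ L := fun ℓ => hL.mem_toFinset
  -- choose r lines through each point
  have hcov' : ∀ p ∈ Pfin, r ≤ (Lfin.filter (fun ℓ => p ∈ ℓ)).card := by
    intro p hp
    have hpP : p ∈ P := (hmemP p).mp hp
    have hset : ((Lfin.filter (fun ℓ => p ∈ ℓ)) : Set (Set (Fin 2 → ℝ)))
        = {ℓ ∈ L | p ∈ ℓ} := by
      ext ℓ
      simp [hmemL ℓ]
    have hc := hcover p hpP
    rw [← hset, Set.ncard_coe_finset] at hc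
    exact hc
  have hexS : ∀ p : Fin 2 → ℝ, ∃ t : Finset (Set (Fin 2 → ℝ)),
      p ∈ Pfin → t ⊆ Lfin.filter (fun ℓ => p ∈ ℓ) ∧ t.card = r := by
    intro p
    by_cases hp : p ∈ Pfin
    · obtain ⟨t, ht, htc⟩ := Finset.exists_subset_card_eq (hcov' p hp)
      exact ⟨t, fun _ => ⟨ht, htc⟩⟩
    · exact ⟨∅, fun h => absurd h hp⟩
  choose S hS using hexS
  have hScard : ∀ p ∈ Pfin, (S p).card = r := fun p hp => (hS p hp).2
  have hSL : ∀ p ∈ Pfin, ∀ ℓ ∈ S p, ℓ ∈ Lfin := by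
    intro p hp ℓ hℓ
    exact (Finset.mem_filter.mp ((hS p hp).1 hℓ)).1
  have hSmem : ∀ p ∈ Pfin, ∀ ℓ ∈ S p, p ∈ ℓ := by
    intro p hp ℓ hℓ
    exact (Finset.mem_filter.mp ((hS p hp).1 hℓ)).2
  have hSline : ∀ p ∈ Pfin, ∀ ℓ ∈ S p, IsLine ℓ := by
    intro p hp ℓ hℓ
    exact hlines ℓ ((hmemL ℓ).mp (hSL p hp ℓ hℓ))
  -- key per-line counting bound
  have hQ : ∀ p ∈ Pfin, ∀ ℓ ∈ S p,
      (Pfin.filter (fun q => ℓ ∈ S q)).card * (r - 1) ≤ T := by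
    intro p hp ℓ hℓ
    have hℓL : ℓ ∈ L := (hmemL ℓ).mp (hSL p hp ℓ hℓ)
    have hℓline : IsLine ℓ := hlines ℓ hℓL
    set Q := Pfin.filter (fun q => ℓ ∈ S q) with hQdef
    set Nb := Lfin.filter (fun ℓ' => ℓ' ≠ ℓ ∧ ∃ z ∈ P, z ∈ ℓ ∧ z ∈ ℓ') with hNbdef
    have hNbT : Nb.card ≤ T := by
      have hset : ((Nb : Finset (Set (Fin 2 → ℝ))) : Set (Set (Fin 2 → ℝ)))
          = {ℓ' ∈ L | ℓ' ≠ ℓ ∧ ∃ z ∈ P, z ∈ ℓ ∧ z ∈ ℓ'} := by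
        ext ℓ'
        simp only [hNbdef, Finset.coe_filter, Set.mem_setOf_eq, Set.mem_sep_iff, hmemL ℓ']
      have hd := hdeg ℓ hℓL
      rw [← hset, Set.ncard_coe_finset] at hd
      exact hd
    have hQmem : ∀ q ∈ Q, q ∈ Pfin ∧ ℓ ∈ S q := fun q hq =>
      ⟨(Finset.mem_filter.mp hq).1, (Finset.mem_filter.mp hq).2⟩
    have hdisj : ∀ q1 ∈ Q, ∀ q2 ∈ Q, q1 ≠ q2 →
        Disjoint ((S q1).erase ℓ) ((S q2).erase ℓ) := by
      intro q1 hq1 q2 hq2 hne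
      rw [Finset.disjoint_left]
      intro m hm1 hm2
      obtain ⟨hm1ne, hm1S⟩ := Finset.mem_erase.mp hm1
      obtain ⟨hm2ne, hm2S⟩ := Finset.mem_erase.mp hm2
      obtain ⟨hq1P, hq1ℓ⟩ := hQmem q1 hq1
      obtain ⟨hq2P, hq2ℓ⟩ := hQmem q2 hq2
      apply hm1ne
      exact line_eq_of_two_mem (hSline q1 hq1P m hm1S) hℓline
        (hSmem q1 hq1P m hm1S) (hSmem q2 hq2P m hm2S)
        (hSmem q1 hq1P ℓ hq1ℓ) (hSmem q2 hq2P ℓ hq2ℓ) hne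
    have hsubNb : ∀ q ∈ Q, (S q).erase ℓ ⊆ Nb := by
      intro q hq m hm
      obtain ⟨hmne, hmS⟩ := Finset.mem_erase.mp hm
      obtain ⟨hqP, hqℓ⟩ := hQmem q hq
      refine Finset.mem_filter.mpr ⟨hSL q hqP m hmS, hmne, q, (hmemP q).mp hqP,
        hSmem q hqP ℓ hqℓ, hSmem q hqP m hmS⟩
    have hbUsub : Q.biUnion (fun q => (S q).erase ℓ) ⊆ Nb :=
      Finset.biUnion_subset.mpr hsubNb
    have hcardB : (Q.biUnion (fun q => (S q).erase ℓ)).card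
        = ∑ q ∈ Q, ((S q).erase ℓ).card := Finset.card_biUnion hdisj
    have hsum : ∑ q ∈ Q, ((S q).erase ℓ).card = Q.card * (r - 1) := by
      rw [Finset.sum_congr rfl (fun q hq => ?_), Finset.sum_const, smul_eq_mul]
      obtain ⟨hqP, hqℓ⟩ := hQmem q hq
      rw [Finset.card_erase_of_mem hqℓ, hScard q hqP]
    calc Q.card * (r - 1) = (Q.biUnion (fun q => (S q).erase ℓ)).card := by
          rw [hcardB, hsum]
      _ ≤ Nb.card := Finset.card_le_card hbUsub
      _ ≤ T := hNbT
  -- neighbour bound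
  have hnbr : ∀ p ∈ Pfin,
      (Pfin.filter (fun q => ((S p) ∩ (S q)).Nonempty)).card ≤ 2*T+1 := by
    intro p hp
    have hsub : Pfin.filter (fun q => ((S p) ∩ (S q)).Nonempty)
        ⊆ insert p ((S p).biUnion
            (fun ℓ => (Pfin.filter (fun q => ℓ ∈ S q)).erase p)) := by
      intro q hq
      have hq' := Finset.mem_filter.mp hq
      obtain ⟨ℓ₀, hℓ₀⟩ := hq'.2
      obtain ⟨hℓ₀p, hℓ₀q⟩ := Finset.mem_inter.mp hℓ₀
      by_cases hqp : q = p
      · subst hqp; exact Finset.mem_insert_self _ _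
      · refine Finset.mem_insert_of_mem (Finset.mem_biUnion.mpr ⟨ℓ₀, hℓ₀p, ?_⟩)
        exact Finset.mem_erase.mpr ⟨hqp, Finset.mem_filter.mpr ⟨hq'.1, hℓ₀q⟩⟩
    have hc1 : (Pfin.filter (fun q => ((S p) ∩ (S q)).Nonempty)).card
        ≤ 1 + ∑ ℓ ∈ S p, ((Pfin.filter (fun q => ℓ ∈ S q)).erase p).card := by
      calc (Pfin.filter (fun q => ((S p) ∩ (S q)).Nonempty)).card
          ≤ (insert p ((S p).biUnion
              (fun ℓ => (Pfin.filter (fun q => ℓ ∈ S q)).erase p))).card :=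
            Finset.card_le_card hsub
        _ ≤ ((S p).biUnion (fun ℓ => (Pfin.filter (fun q => ℓ ∈ S q)).erase p)).card + 1 :=
            Finset.card_insert_le _ _
        _ ≤ (∑ ℓ ∈ S p, ((Pfin.filter (fun q => ℓ ∈ S q)).erase p).card) + 1 := by
            exact Nat.add_le_add_right (Finset.card_biUnion_le) 1
        _ = 1 + ∑ ℓ ∈ S p, ((Pfin.filter (fun q => ℓ ∈ S q)).erase p).card := by ring
    -- per line bound and r-1 ≤ T
    have hSpne : (S p).Nonempty := by
      rw [← Finset.card_pos, hScard p hp]; omega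
    obtain ⟨ℓ₁, hℓ₁⟩ := hSpne
    have hrT : r - 1 ≤ T := by
      have hq := hQ p hp ℓ₁ hℓ₁
      have hpQ : p ∈ Pfin.filter (fun q => ℓ₁ ∈ S q) := Finset.mem_filter.mpr ⟨hp, hℓ₁⟩
      have hcard1 : 1 ≤ (Pfin.filter (fun q => ℓ₁ ∈ S q)).card :=
        Finset.card_pos.mpr ⟨p, hpQ⟩
      calc r - 1 = 1 * (r-1) := (one_mul _).symm
        _ ≤ (Pfin.filter (fun q => ℓ₁ ∈ S q)).card * (r-1) :=
            Nat.mul_le_mul_right _ hcard1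
        _ ≤ T := hq
    have hper : ∀ ℓ ∈ S p,
        ((Pfin.filter (fun q => ℓ ∈ S q)).erase p).card * (r-1) ≤ T - (r-1) := by
      intro ℓ hℓ
      have hQl := hQ p hp ℓ hℓ
      have hpQ : p ∈ Pfin.filter (fun q => ℓ ∈ S q) := Finset.mem_filter.mpr ⟨hp, hℓ⟩
      rw [Finset.card_erase_of_mem hpQ, Nat.sub_mul, one_mul]
      exact Nat.sub_le_sub_right hQl _
    have hsum : (∑ ℓ ∈ S p, ((Pfin.filter (fun q => ℓ ∈ S q)).erase p).card) * (r-1)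
        ≤ r * (T - (r-1)) := by
      rw [Finset.sum_mul]
      calc ∑ ℓ ∈ S p, ((Pfin.filter (fun q => ℓ ∈ S q)).erase p).card * (r-1)
          ≤ ∑ _ℓ ∈ S p, (T - (r-1)) := Finset.sum_le_sum hper
        _ = r * (T - (r-1)) := by rw [Finset.sum_const, hScard p hp, smul_eq_mul]
    have hfinal : (∑ ℓ ∈ S p, ((Pfin.filter (fun q => ℓ ∈ S q)).erase p).card) ≤ 2*T := by
      set s := ∑ ℓ ∈ S p, ((Pfin.filter (fun q => ℓ ∈ S q)).erase p).card with hsdef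
      set a := r - 1 with hadef
      have ha : 1 ≤ a := by omega
      have haT : a ≤ T := hrT
      obtain ⟨u, hu⟩ : ∃ u, T = a + u := ⟨T - a, by omega⟩
      have hr_eq : r = a + 1 := by omega
      have h1 : s * a ≤ (a+1) * u := by
        have := hsum
        rw [hr_eq, hu] at this
        simpa [Nat.add_sub_cancel_left] using this
      have h2 : (a+1) * u ≤ (2*T) * a := by
        rw [hu]
        have hu_le : u ≤ u * a := Nat.le_mul_of_pos_right u (by omega)
        calc (a+1) * u = a*u + u := by ring
          _ ≤ a*u + u*a := Nat.add_le_add_left hu_le _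
          _ ≤ 2*a*a + (a*u + u*a) := Nat.le_add_left _ _
          _ = (2*(a+u))*a := by ring
      exact Nat.le_of_mul_le_mul_right (h1.trans h2) (by omega : 0 < a)
    omega
  -- setting up the LLL
  set Ω : Finset (Finset (Set (Fin 2 → ℝ))) := Lfin.powerset with hΩdef
  set I : Finset ((Fin 2 → ℝ) × Bool) := Pfin ×ˢ (Finset.univ : Finset Bool) with hIdef
  set A : (Fin 2 → ℝ) × Bool → Finset (Finset (Set (Fin 2 → ℝ))) :=
    fun i => Ω.filter (fun R => ∀ ℓ ∈ S i.1, (ℓ ∈ R ↔ i.2 = true)) with hAdef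
  set G : ((Fin 2 → ℝ) × Bool) → ((Fin 2 → ℝ) × Bool) → Prop :=
    fun i j => i.2 ≠ j.2 ∧ ((S i.1) ∩ (S j.1)).Nonempty with hGdef
  have hdegb : ∀ i ∈ I, (I.filter (fun j => G i j)).card ≤ 2*T+1 := by
    rintro ⟨p, b⟩ hiI
    have hp : p ∈ Pfin := (Finset.mem_product.mp hiI).1
    refine le_trans (Finset.card_le_card_of_injOn (fun j => j.1) ?_ ?_) (hnbr p hp)
    · rintro ⟨q, c⟩ hj
      have h := Finset.mem_filter.mp hj
      have hqP : q ∈ Pfin := (Finset.mem_product.mp h.1).1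
      exact Finset.mem_filter.mpr ⟨hqP, h.2.2⟩
    · rintro ⟨q, c⟩ hq ⟨q', c'⟩ hq' heq
      simp only [Finset.mem_coe] at hq hq'
      have hc := (Finset.mem_filter.mp hq).2.1
      have hc' := (Finset.mem_filter.mp hq').2.1
      simp only at heq hc hc'
      subst heq
      have : c = c' := by
        cases b <;> cases c <;> cases c' <;> simp_all
      rw [this]
  have hlop : ∀ i ∈ I, ∀ J ⊆ I, i ∉ J → (∀ j ∈ J, ¬ G i j) →
      (A i ∩ Ncap Ω A J).card * 2^r ≤ (Ncap Ω A J).card := by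
    rintro ⟨p, b⟩ hiI J hJI hiJ hJG
    have hp : p ∈ Pfin := (Finset.mem_product.mp hiI).1
    have hSpL : S p ⊆ Lfin := fun ℓ hℓ => hSL p hp ℓ hℓ
    have key_out : ∀ (R K : Finset (Set (Fin 2 → ℝ))), K ⊆ S p → ∀ ℓ, ℓ ∉ S p →
        (ℓ ∈ (R \ S p) ∪ K ↔ ℓ ∈ R) := by
      intro R K hK ℓ hℓ
      simp only [Finset.mem_union, Finset.mem_sdiff]
      constructor
      · rintro (⟨h, _⟩ | h)
        · exact h
        · exact absurd (hK h) hℓ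
      · intro h; exact Or.inl ⟨h, hℓ⟩
    have hmaps : ∀ RK ∈ (A (p,b) ∩ Ncap Ω A J) ×ˢ (S p).powerset,
        (RK.1 \ S p) ∪ RK.2 ∈ Ncap Ω A J := by
      rintro ⟨R, K⟩ hRK
      obtain ⟨hR, hK⟩ := Finset.mem_product.mp hRK
      obtain ⟨hRA, hRN⟩ := Finset.mem_inter.mp hR
      have hKsub : K ⊆ S p := Finset.mem_powerset.mp hK
      obtain ⟨hRΩ, hRmono⟩ := Finset.mem_filter.mp hRA
      obtain ⟨_, hRav⟩ := mem_Ncap.mp hRN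
      refine mem_Ncap.mpr ⟨?_, ?_⟩
      · rw [hΩdef, Finset.mem_powerset]
        exact Finset.union_subset
          ((Finset.sdiff_subset).trans (Finset.mem_powerset.mp (by rwa [hΩdef] at hRΩ)))
          (hKsub.trans hSpL)
      · rintro ⟨q, c⟩ hj hfA
        have hfm := (Finset.mem_filter.mp hfA).2
        have hnotall : ¬ ∀ ℓ ∈ S q, (ℓ ∈ R ↔ c = true) := by
          intro hall
          exact hRav (q, c) hj (Finset.mem_filter.mpr ⟨hRΩ, hall⟩)
        obtain ⟨ℓ₀, hℓ₀Sq, hℓ₀⟩ :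
            ∃ ℓ₀ ∈ S q, ¬ (ℓ₀ ∈ R ↔ c = true) := by
          simpa only [not_forall, exists_prop] using hnotall
        have hℓ₀p : ℓ₀ ∉ S p := by
          intro hin
          rcases not_and_or.mp (hJG _ hj) with hbc | hfar
          · push_neg at hbc
            have hmono := hRmono ℓ₀ hin
            simp only at hbc
            rw [← hbc] at hℓ₀
            exact hℓ₀ hmono
          · exact hfar ⟨ℓ₀, Finset.mem_inter.mpr ⟨hin, hℓ₀Sq⟩⟩
        apply hℓ₀
        rw [← key_out R K hKsub ℓ₀ hℓ₀p]
        exact hfm ℓ₀ hℓ₀Sq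
    have hinjOn : Set.InjOn (fun RK : Finset (Set (Fin 2 → ℝ)) × Finset (Set (Fin 2 → ℝ)) =>
        (RK.1 \ S p) ∪ RK.2) ↑((A (p,b) ∩ Ncap Ω A J) ×ˢ (S p).powerset) := by
      rintro ⟨R, K⟩ hRK ⟨R', K'⟩ hRK' heq
      simp only [Finset.mem_coe] at hRK hRK'
      obtain ⟨hR, hK⟩ := Finset.mem_product.mp hRK
      obtain ⟨hR', hK'⟩ := Finset.mem_product.mp hRK'
      have hKsub : K ⊆ S p := Finset.mem_powerset.mp hK
      have hKsub' : K' ⊆ S p := Finset.mem_powerset.mp hK'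
      have hRmono := (Finset.mem_filter.mp (Finset.mem_inter.mp hR).1).2
      have hRmono' := (Finset.mem_filter.mp (Finset.mem_inter.mp hR').1).2
      simp only at heq hRmono hRmono'
      have hKK : K = K' := by
        ext ℓ
        constructor
        · intro hℓ
          have hmem : ℓ ∈ (R' \ S p) ∪ K' := by rw [← heq]; exact Finset.mem_union_right _ hℓ
          rcases Finset.mem_union.mp hmem with hmem | hmem
          · exact absurd (hKsub hℓ) (Finset.mem_sdiff.mp hmem).2
          · exact hmem
        · intro hℓ
          have hmem : ℓ ∈ (R \ S p) ∪ K := by rw [heq]; exact Finset.mem_union_right _ hℓ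
          rcases Finset.mem_union.mp hmem with hmem | hmem
          · exact absurd (hKsub' hℓ) (Finset.mem_sdiff.mp hmem).2
          · exact hmem
      have hRR : R = R' := by
        ext ℓ
        by_cases hin : ℓ ∈ S p
        · rw [hRmono ℓ hin, hRmono' ℓ hin]
        · rw [← key_out R K hKsub ℓ hin, heq, key_out R' K' hKsub' ℓ hin]
      rw [Prod.mk.injEq]
      exact ⟨hRR, hKK⟩
    calc (A (p,b) ∩ Ncap Ω A J).card * 2^r
        = ((A (p,b) ∩ Ncap Ω A J) ×ˢ (S p).powerset).card := by
          rw [Finset.card_product, Finset.card_powerset, hScard p hp]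
      _ ≤ (Ncap Ω A J).card := Finset.card_le_card_of_injOn _ hmaps hinjOn
  -- apply the LLL
  have hM : 0 < 2^r := Nat.pow_pos (by omega)
  have hx0 : (0:ℝ) < ((2*T+2:ℕ):ℝ)⁻¹ := by positivity
  have hx1 : ((2*T+2:ℕ):ℝ)⁻¹ < 1 := by
    apply inv_lt_one_of_one_lt₀
    have : (2:ℝ) ≤ ((2*T+2:ℕ):ℝ) := by push_cast; linarith [Nat.cast_nonneg (α := ℝ) T]
    linarith
  have hnum := numeric_lll (T := T) (r := r) (by omega) hTr
  have hdegb' : ∀ i ∈ I,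
      (@Finset.filter _ (fun j => G i j) (fun j => Classical.propDecidable _) I).card
        ≤ 2*T+1 := by
    intro i hi
    rw [Finset.filter_congr_decidable]
    exact hdegb i hi
  obtain ⟨R, hRΩ, hRav⟩ := lll_exists Ω I A G (2^r) (2*T+1) hM
    (((2*T+2:ℕ):ℝ))⁻¹ hx0 hx1 hnum hdegb' hlop ⟨∅, by simp [hΩdef]⟩
  -- extract the two covers
  refine ⟨{ℓ ∈ L | ℓ ∈ R}, {ℓ ∈ L | ℓ ∉ R}, ?_, ?_, ?_, ?_⟩
  · ext ℓ
    simp only [Set.mem_union, Set.mem_setOf_eq]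
    constructor
    · rintro (⟨h, _⟩ | ⟨h, _⟩) <;> exact h
    · intro h
      by_cases hR : ℓ ∈ R
      · exact Or.inl ⟨h, hR⟩
      · exact Or.inr ⟨h, hR⟩
  · rw [Set.disjoint_left]
    rintro ℓ ⟨_, hR⟩ ⟨_, hnR⟩
    exact hnR hR
  · intro p hpP
    have hp : p ∈ Pfin := (hmemP p).mpr hpP
    have hiI : (p, false) ∈ I := Finset.mem_product.mpr ⟨hp, Finset.mem_univ _⟩
    have hav := hRav (p, false) hiI
    have hnotall : ¬ ∀ ℓ ∈ S p, (ℓ ∈ R ↔ (false = true)) := by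
      intro hall
      exact hav (Finset.mem_filter.mpr ⟨hRΩ, hall⟩)
    obtain ⟨ℓ, hℓS, hℓ⟩ : ∃ ℓ ∈ S p, ¬ (ℓ ∈ R ↔ (false = true)) := by
      simpa only [not_forall, exists_prop] using hnotall
    have hℓR : ℓ ∈ R := by
      by_contra h
      exact hℓ (by simp [h])
    exact ⟨ℓ, ⟨(hmemL ℓ).mp (hSL p hp ℓ hℓS), hℓR⟩, hSmem p hp ℓ hℓS⟩
  · intro p hpP
    have hp : p ∈ Pfin := (hmemP p).mpr hpP
    have hiI : (p, true) ∈ I := Finset.mem_product.mpr ⟨hp, Finset.mem_univ _⟩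
    have hav := hRav (p, true) hiI
    have hnotall : ¬ ∀ ℓ ∈ S p, (ℓ ∈ R ↔ (true = true)) := by
      intro hall
      exact hav (Finset.mem_filter.mpr ⟨hRΩ, hall⟩)
    obtain ⟨ℓ, hℓS, hℓ⟩ : ∃ ℓ ∈ S p, ¬ (ℓ ∈ R ↔ (true = true)) := by
      simpa only [not_forall, exists_prop] using hnotall
    have hℓR : ℓ ∉ R := by
      intro h
      exact hℓ (by simp [h])
    exact ⟨ℓ, ⟨(hmemL ℓ).mp (hSL p hp ℓ hℓS), hℓR⟩, hSmem p hp ℓ hℓS⟩
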